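/- Let G be the group presented by ⟨α, β, γ | β^{2k'} = 1, γ² = β^{k'}, βγ = γβ^{-1}, α^k = 1, αβ = βα, αγ = β^a γα⟩ with a = 2m even. Then the subgroup D = ⟨β, γ⟩ is normal in G, the subgroup Z = ⟨α⟩ satisfies D ∩ Z = 1 and DZ = G, so G is an internal semidirect product Z_k ⋉ D_{k'}. -/

import Mathlib

open Pointwise

/-- Relators of the group
`G(a) = ⟨α, β, γ | β^{2k'} = 1, γ² = β^{k'}, βγ = γβ⁻¹, α^k = 1, αβ = βα, αγ = β^a γα⟩`
with `a = 2m` (generators: `0 ↦ α`, `1 ↦ β`, `2 ↦ γ`). -/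
def GaRels (k k' a : ℕ) : Set (FreeGroup (Fin 3)) :=
  {FreeGroup.of 1 ^ (2 * k'),
   FreeGroup.of 2 ^ 2 * (FreeGroup.of 1 ^ k')⁻¹,
   FreeGroup.of 1 * FreeGroup.of 2 * FreeGroup.of 1 * (FreeGroup.of 2)⁻¹,
   FreeGroup.of 0 ^ k,
   FreeGroup.of 0 * FreeGroup.of 1 * (FreeGroup.of 1 * FreeGroup.of 0)⁻¹,
   FreeGroup.of 0 * FreeGroup.of 2 *
     (FreeGroup.of 1 ^ a * FreeGroup.of 2 * FreeGroup.of 0)⁻¹}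

/-! Conjugation by `α^{±1}` fixes `β` and sends `γ` to `β^{±a} γ`, so `α` normalises
`D = ⟨β, γ⟩`, which is then normal since `α, β, γ` generate. The map to `ℤ/k` sending
`α ↦ 1` and `β, γ ↦ 0` kills `D` and, as `α^k = 1`, is injective on `⟨α⟩`; hence
`D ∩ ⟨α⟩ = 1`. Finally `D ⟨α⟩` is a subgroup (as `D` is normal) containing every generator. -/

namespace Subgroup

variable {G : Type*} [Group G]

theorem mem_normalizer_closure_of_conj_mem {s : Set G} {g : G}
    (h₁ : ∀ x ∈ s, g * x * g⁻¹ ∈ closure s) (h₂ : ∀ x ∈ s, g⁻¹ * x * g ∈ closure s) :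
    g ∈ normalizer (closure s : Set G) := by
  rw [mem_normalizer_iff_map_conj_eq, MonoidHom.map_closure]
  refine le_antisymm ((closure_le _).2 ?_) ?_
  · rintro _ ⟨x, hx, rfl⟩
    exact h₁ x hx
  · rw [closure_le, ← MonoidHom.map_closure]
    exact fun x hx ↦ ⟨g⁻¹ * x * g, h₂ x hx, by simp [mul_assoc]⟩

theorem normal_of_closure_eq_top_of_subset_normalizer {H : Subgroup G} {t : Set G}
    (ht : closure t = ⊤) (h : t ⊆ normalizer (H : Set G)) : H.Normal :=
  normalizer_eq_top_iff.mp (eq_top_iff.2 (ht ▸ (closure_le _).2 h))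

theorem zpowers_inf_ker_eq_bot {G' : Type*} [Group G'] {f : G →* G'} {g : G}
    (h : orderOf g ∣ orderOf (f g)) : zpowers g ⊓ f.ker = ⊥ := by
  refine eq_bot_iff.2 fun x hx ↦ ?_
  obtain ⟨⟨n, rfl⟩, hxf⟩ := mem_inf.1 hx
  rw [MonoidHom.mem_ker, map_zpow, ← orderOf_dvd_iff_zpow_eq_one] at hxf
  exact mem_bot.2 (orderOf_dvd_iff_zpow_eq_one.1 ((Int.natCast_dvd_natCast.2 h).trans hxf))

end Subgroup

namespace GaRels

open PresentedGroup Subgroup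

variable {k k' a : ℕ}

theorem of_zero_pow : (of 0 : PresentedGroup (GaRels k k' a)) ^ k = 1 := by
  have h := one_of_mem (rels := GaRels k k' a) (x := FreeGroup.of 0 ^ k) (by simp [GaRels])
  rwa [map_pow] at h

theorem commute_of_zero_of_one :
    Commute (of 0 : PresentedGroup (GaRels k k' a)) (of 1) :=
  mk_eq_mk_of_mul_inv_mem (by simp [GaRels])

theorem of_zero_mul_of_two :
    (of 0 : PresentedGroup (GaRels k k' a)) * of 2 = of 1 ^ a * of 2 * of 0 := by
  have h := mk_eq_mk_of_mul_inv_mem (rels := GaRels k k' a)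
    (x := FreeGroup.of 0 * FreeGroup.of 2)
    (y := FreeGroup.of 1 ^ a * FreeGroup.of 2 * FreeGroup.of 0) (by simp [GaRels])
  simp only [map_mul, map_pow] at h
  exact h

theorem of_zero_conj_of_one :
    (of 0 : PresentedGroup (GaRels k k' a)) * of 1 * (of 0)⁻¹ = of 1 := by
  rw [commute_of_zero_of_one.eq, mul_inv_cancel_right]

theorem of_zero_inv_conj_of_one :
    (of 0 : PresentedGroup (GaRels k k' a))⁻¹ * of 1 * of 0 = of 1 := by
  rw [mul_assoc, ← commute_of_zero_of_one.eq, inv_mul_cancel_left]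

theorem of_zero_conj_of_two :
    (of 0 : PresentedGroup (GaRels k k' a)) * of 2 * (of 0)⁻¹ = of 1 ^ a * of 2 := by
  rw [of_zero_mul_of_two, mul_inv_cancel_right]

theorem of_zero_inv_conj_of_two :
    (of 0 : PresentedGroup (GaRels k k' a))⁻¹ * of 2 * of 0 = (of 1 ^ a)⁻¹ * of 2 := by
  have hc : Commute (of 0 : PresentedGroup (GaRels k k' a))⁻¹ (of 1 ^ a)⁻¹ :=
    (commute_of_zero_of_one.pow_right a).inv_inv
  calc (of 0 : PresentedGroup (GaRels k k' a))⁻¹ * of 2 * of 0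
      = (of 0)⁻¹ * (of 1 ^ a)⁻¹ * (of 0 * of 2 * (of 0)⁻¹) * of 0 := by
        rw [of_zero_conj_of_two]; group
    _ = (of 1 ^ a)⁻¹ * of 2 := by rw [hc.eq]; group

theorem of_one_mem_closure : (of 1 : PresentedGroup (GaRels k k' a)) ∈ closure {of 1, of 2} :=
  subset_closure (by simp)

theorem of_two_mem_closure : (of 2 : PresentedGroup (GaRels k k' a)) ∈ closure {of 1, of 2} :=
  subset_closure (by simp)

theorem of_zero_mem_normalizer :
    (of 0 : PresentedGroup (GaRels k k' a)) ∈
      normalizer ((closure {of 1, of 2} : Subgroup (PresentedGroup (GaRels k k' a))) : Set _) := by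
  refine mem_normalizer_closure_of_conj_mem ?_ ?_ <;> rintro x (rfl | rfl)
  · rw [of_zero_conj_of_one]
    exact of_one_mem_closure
  · rw [of_zero_conj_of_two]
    exact mul_mem (pow_mem of_one_mem_closure a) of_two_mem_closure
  · rw [of_zero_inv_conj_of_one]
    exact of_one_mem_closure
  · rw [of_zero_inv_conj_of_two]
    exact mul_mem (inv_mem (pow_mem of_one_mem_closure a)) of_two_mem_closure

theorem closure_of_one_of_two_normal :
    (closure ({of 1, of 2} : Set (PresentedGroup (GaRels k k' a)))).Normal := by
  refine normal_of_closure_eq_top_of_subset_normalizer (closure_range_of _)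
    (Set.range_subset_iff.2 fun i ↦ ?_)
  fin_cases i
  exacts [of_zero_mem_normalizer, le_normalizer of_one_mem_closure,
    le_normalizer of_two_mem_closure]

theorem closure_of_one_of_two_sup_zpowers_eq_top :
    closure ({of 1, of 2} : Set (PresentedGroup (GaRels k k' a))) ⊔ zpowers (of 0) = ⊤ := by
  rw [eq_top_iff, ← closure_range_of, closure_le, Set.range_subset_iff]
  intro i
  fin_cases i
  exacts [mem_sup_right (mem_zpowers _), mem_sup_left of_one_mem_closure,
    mem_sup_left of_two_mem_closure]

def toZMod : PresentedGroup (GaRels k k' a) →* Multiplicative (ZMod k) :=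
  toGroup (f := ![.ofAdd 1, 1, 1]) <| by
    rintro r (rfl | rfl | rfl | rfl | rfl | rfl) <;> simp [← ofAdd_nsmul]

theorem closure_of_one_of_two_le_ker_toZMod :
    closure ({of 1, of 2} : Set (PresentedGroup (GaRels k k' a))) ≤ toZMod.ker := by
  rw [closure_le]
  rintro _ (rfl | rfl) <;> exact toGroup.of _

theorem orderOf_of_zero_dvd_orderOf_toZMod :
    orderOf (of 0 : PresentedGroup (GaRels k k' a)) ∣
      orderOf (toZMod (of 0 : PresentedGroup (GaRels k k' a))) := by
  rw [toZMod, toGroup.of, Matrix.cons_val_zero, orderOf_ofAdd_eq_addOrderOf, ZMod.addOrderOf_one]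
  exact orderOf_dvd_of_pow_eq_one of_zero_pow

theorem closure_of_one_of_two_inf_zpowers_eq_bot :
    closure ({of 1, of 2} : Set (PresentedGroup (GaRels k k' a))) ⊓ zpowers (of 0) = ⊥ := by
  rw [inf_comm, eq_bot_iff, ← zpowers_inf_ker_eq_bot orderOf_of_zero_dvd_orderOf_toZMod]
  exact inf_le_inf_left _ closure_of_one_of_two_le_ker_toZMod

end GaRels

theorem Ga_internal_semidirect_general (k k' m : ℕ) :
    (Subgroup.closure
        ({PresentedGroup.of 1, PresentedGroup.of 2} :
          Set (PresentedGroup (GaRels k k' (2 * m))))).Normal ∧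
    Subgroup.closure
        ({PresentedGroup.of 1, PresentedGroup.of 2} :
          Set (PresentedGroup (GaRels k k' (2 * m)))) ⊓
      Subgroup.closure {PresentedGroup.of 0} = ⊥ ∧
    (Subgroup.closure
        ({PresentedGroup.of 1, PresentedGroup.of 2} :
          Set (PresentedGroup (GaRels k k' (2 * m)))) :
        Set (PresentedGroup (GaRels k k' (2 * m)))) *
      ((Subgroup.closure
          ({PresentedGroup.of 0} : Set (PresentedGroup (GaRels k k' (2 * m)))) :
          Subgroup (PresentedGroup (GaRels k k' (2 * m)))) :
        Set (PresentedGroup (GaRels k k' (2 * m)))) = Set.univ := by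
  rw [← Subgroup.zpowers_eq_closure]
  have hD := GaRels.closure_of_one_of_two_normal (k := k) (k' := k') (a := 2 * m)
  refine ⟨hD, GaRels.closure_of_one_of_two_inf_zpowers_eq_bot, ?_⟩
  rw [← Subgroup.normal_mul, GaRels.closure_of_one_of_two_sup_zpowers_eq_top]
  rfl

/-- In `G(a)` with `a = 2m` even, the subgroup `D = ⟨β, γ⟩` is normal, the
subgroup `Z = ⟨α⟩` satisfies `D ∩ Z = 1` and `DZ = G`; hence `G(a)` is the
internal semidirect product `Z_k ⋉ D_{k'}`. -/
theorem Ga_internal_semidirect (k k' m : ℕ) (hk : 1 ≤ k) (hk' : 1 ≤ k') :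
    (Subgroup.closure
        ({PresentedGroup.of 1, PresentedGroup.of 2} :
          Set (PresentedGroup (GaRels k k' (2 * m))))).Normal ∧
    Subgroup.closure
        ({PresentedGroup.of 1, PresentedGroup.of 2} :
          Set (PresentedGroup (GaRels k k' (2 * m)))) ⊓
      Subgroup.closure {PresentedGroup.of 0} = ⊥ ∧
    (Subgroup.closure
        ({PresentedGroup.of 1, PresentedGroup.of 2} :
          Set (PresentedGroup (GaRels k k' (2 * m)))) :
        Set (PresentedGroup (GaRels k k' (2 * m)))) *
      ((Subgroup.closure
          ({PresentedGroup.of 0} : Set (PresentedGroup (GaRels k k' (2 * m)))) :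
          Subgroup (PresentedGroup (GaRels k k' (2 * m)))) :
        Set (PresentedGroup (GaRels k k' (2 * m)))) = Set.univ :=
  Ga_internal_semidirect_general k k' m
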